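/- arXiv:1812.02972 — 3 statements merged into one kernel-verified Lean document; each statement's English description precedes it below -/
import Mathlib

section
/- There exists c₀(τ) ∈ (0, 2√(a−d)) such that the equation Δ_c(λ,τ) = 0 has a positive real solution λ if and only if c ≥ c₀(τ). -/
open Set Filter

/-- Assumption (H): Fisher–KPP type structure on the nonlinearity `f`:
`f ∈ C^{1+ν}([0,∞))`, `f(0)=0`, `f'(0) - d > 0`, `f(s) = d·s` has a unique positive
root `u*`, `f` is increasing on `[0,u*]` and `s ↦ f(s)/s` is decreasing on `(0,u*]`. -/
def HypH (d : ℝ) (f : ℝ → ℝ) (ustar : ℝ) : Prop :=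
  0 < d ∧
  DifferentiableOn ℝ f (Set.Ici 0) ∧
  (∃ ν C : ℝ, 0 < ν ∧ ν < 1 ∧ ∀ s ∈ Set.Ici (0 : ℝ), ∀ t ∈ Set.Ici (0 : ℝ),
      |derivWithin f (Set.Ici 0) s - derivWithin f (Set.Ici 0) t| ≤ C * |s - t| ^ ν) ∧
  f 0 = 0 ∧
  d < derivWithin f (Set.Ici 0) 0 ∧
  0 < ustar ∧ f ustar = d * ustar ∧
  (∀ s : ℝ, 0 < s → f s = d * s → s = ustar) ∧
  MonotoneOn f (Set.Icc 0 ustar) ∧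
  AntitoneOn (fun s => f s / s) (Set.Ioc 0 ustar)

/-- Conditions (1.11) on the initial data `(φ, g, h)` over the history interval `[-τ,0]`. -/
def InitData (τ ustar : ℝ) (φ : ℝ → ℝ → ℝ) (g h : ℝ → ℝ) : Prop :=
  (∀ θ ∈ Set.Icc (-τ) 0, g θ < h θ) ∧
  (∀ θ ∈ Set.Icc (-τ) 0, ContDiffOn ℝ 2 (φ θ) (Set.Icc (g θ) (h θ))) ∧
  (∀ x : ℝ, DifferentiableOn ℝ (fun θ => φ θ x) (Set.Icc (-τ) 0)) ∧
  (∀ θ ∈ Set.Icc (-τ) 0, ∀ x ∈ Set.Ioo (g θ) (h θ), 0 < φ θ x ∧ φ θ x ≤ ustar) ∧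
  (∀ θ ∈ Set.Icc (-τ) 0, ∀ x : ℝ, x ∉ Set.Ioo (g θ) (h θ) → φ θ x = 0)

/-- Compatible condition (1.12): `[g(θ), h(θ)] ⊆ [g(0), h(0)]` for `θ ∈ [-τ,0]`. -/
def Compat (τ : ℝ) (g h : ℝ → ℝ) : Prop :=
  ∀ θ ∈ Set.Icc (-τ) 0, Set.Icc (g θ) (h θ) ⊆ Set.Icc (g 0) (h 0)

/-- `(u, g, h)` solves the free boundary problem (P) with initial data `φ`,
with `u` extended by `0` outside `(g(t), h(t))`. -/
structure SolP (d τ μ : ℝ) (f : ℝ → ℝ) (φ : ℝ → ℝ → ℝ)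
    (u : ℝ → ℝ → ℝ) (g h : ℝ → ℝ) : Prop where
  interval : ∀ t > 0, g t < h t
  diff_x : ∀ t > 0, ∀ x ∈ Set.Icc (g t) (h t),
    DifferentiableAt ℝ (u t) x ∧ DifferentiableAt ℝ (deriv (u t)) x
  pde : ∀ t > 0, ∀ x ∈ Set.Ioo (g t) (h t),
    HasDerivAt (fun s => u s x)
      (deriv (deriv (u t)) x - d * u t x + f (u (t - τ) x)) t
  bc_left : ∀ t > 0, u t (g t) = 0
  bc_right : ∀ t > 0, u t (h t) = 0
  fb_left : ∀ t > 0, HasDerivAt g (-μ * deriv (u t) (g t)) t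
  fb_right : ∀ t > 0, HasDerivAt h (-μ * deriv (u t) (h t)) t
  init : ∀ θ ∈ Set.Icc (-τ) 0, ∀ x : ℝ, u θ x = φ θ x
  ext_zero : ∀ t > 0, ∀ x : ℝ, x ∉ Set.Ioo (g t) (h t) → u t x = 0

/-- `q ∈ C²([0,∞))` solves the semi-wave ODE (3.1) with speed `c` and delay `τ`:
`q'' - c q' - d q + f(q(· - cτ)) = 0` on `(0,∞)` and `q = 0` on `(-∞,0]`. -/
def SWode (d τ c : ℝ) (f : ℝ → ℝ) (q : ℝ → ℝ) : Prop :=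
  ContDiffOn ℝ 2 q (Set.Ici 0) ∧
  (∀ z > 0, deriv (deriv q) z - c * deriv q z - d * q z + f (q (z - c * τ)) = 0) ∧
  (∀ z ≤ 0, q z = 0)

/-- A positive solution of the semi-wave ODE (3.1). -/
def SWpos (d τ c : ℝ) (f : ℝ → ℝ) (q : ℝ → ℝ) : Prop :=
  SWode d τ c f q ∧ ∀ z > 0, 0 < q z

/-- `(c, q)` solves the full semi-wave problem (1.14):
positive solution of (3.1) with `q(∞) = u*` and the front condition `μ q'₊(0) = c`. -/
def SemiWave (d τ μ : ℝ) (f : ℝ → ℝ) (ustar c : ℝ) (q : ℝ → ℝ) : Prop :=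
  0 < c ∧ SWode d τ c f q ∧ (∀ z > 0, 0 < q z) ∧
  Filter.Tendsto q Filter.atTop (nhds ustar) ∧
  μ * derivWithin q (Set.Ici 0) 0 = c

/-- Spreading: `g(t) → -∞`, `h(t) → ∞` and `u(t,·) → u*` locally uniformly on `ℝ`. -/
def Spreading (ustar : ℝ) (u : ℝ → ℝ → ℝ) (g h : ℝ → ℝ) : Prop :=
  Filter.Tendsto g Filter.atTop Filter.atBot ∧
  Filter.Tendsto h Filter.atTop Filter.atTop ∧
  ∀ a b : ℝ, TendstoUniformlyOn (fun t x => u t x) (fun _ => ustar) Filter.atTop (Set.Icc a b)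

noncomputable def charPoly (d τ a c lam : ℝ) : ℝ :=
  lam ^ 2 - c * lam - d + a * Real.exp (-(lam * c * τ))

lemma charPoly_cont (d τ a c : ℝ) : Continuous (charPoly d τ a c) := by
  unfold charPoly; fun_prop

lemma charPoly_contc (d τ a lam : ℝ) : Continuous (fun c => charPoly d τ a c lam) := by
  unfold charPoly; fun_prop

lemma exp_sub_exp_le {u v : ℝ} (hu : 0 ≤ u) (huv : u ≤ v) :
    Real.exp (-u) - Real.exp (-v) ≤ v - u := by
  have h1 : Real.exp (-v) = Real.exp (-u) * Real.exp (u - v) := by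
    rw [← Real.exp_add]; ring_nf
  have h2 : (u - v) + 1 ≤ Real.exp (u - v) := Real.add_one_le_exp _
  have h3 : Real.exp (-u) ≤ 1 := Real.exp_le_one_iff.mpr (by linarith)
  have h4 : (0:ℝ) < Real.exp (-u) := Real.exp_pos _
  nlinarith

lemma charPoly_anti (d τ a : ℝ) (ha : 0 < a) (hτ : 0 ≤ τ) {c c' lam : ℝ}
    (hcc : c ≤ c') (hlam : 0 ≤ lam) :
    charPoly d τ a c' lam ≤ charPoly d τ a c lam := by
  unfold charPoly
  have h1 : Real.exp (-(lam * c' * τ)) ≤ Real.exp (-(lam * c * τ)) := by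
    apply Real.exp_le_exp.mpr
    nlinarith [mul_nonneg (mul_nonneg hlam hτ) (sub_nonneg.mpr hcc)]
  nlinarith

lemma charPoly_lip (d τ a : ℝ) (ha : 0 < a) (hτ : 0 ≤ τ) {c c' lam : ℝ}
    (hc : 0 ≤ c) (hcc : c ≤ c') (hlam : 0 ≤ lam) :
    charPoly d τ a c lam ≤ charPoly d τ a c' lam + (c' - c) * lam * (1 + a * τ) := by
  unfold charPoly
  have h1 : Real.exp (-(lam * c * τ)) - Real.exp (-(lam * c' * τ)) ≤ lam * c' * τ - lam * c * τ :=
    exp_sub_exp_le (by positivity)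
      (by nlinarith [mul_nonneg (mul_nonneg hlam hτ) (sub_nonneg.mpr hcc)])
  nlinarith


set_option maxHeartbeats 1000000 in
/-- Lemma 3.2(i): there exists `c₀(τ) ∈ (0, 2√(a-d))` such that the characteristic
equation `λ² - cλ - d + a e^{-λcτ} = 0` has a positive real solution iff `c ≥ c₀(τ)`. -/
theorem characteristic_threshold
    (d τ a : ℝ) (hd : 0 < d) (hτ : 0 < τ) (ha : d < a) :
    ∃ c₀ : ℝ, c₀ ∈ Set.Ioo 0 (2 * Real.sqrt (a - d)) ∧
      ∀ c : ℝ, 0 < c →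
        ((∃ lam : ℝ, 0 < lam ∧
            lam ^ 2 - c * lam - d + a * Real.exp (-(lam * c * τ)) = 0) ↔ c₀ ≤ c) := by
  have hconv : ∀ c lam : ℝ,
      lam ^ 2 - c * lam - d + a * Real.exp (-(lam * c * τ)) = charPoly d τ a c lam :=
    fun _ _ => rfl
  simp only [hconv]
  have ha0 : 0 < a := lt_trans hd ha
  have had : 0 < a - d := by linarith
  set s := Real.sqrt (a - d) with hs
  have hs0 : 0 < s := Real.sqrt_pos.mpr had
  have hs2 : s ^ 2 = a - d := Real.sq_sqrt had.le
  -- value at lam = 0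
  have hzero : ∀ c : ℝ, charPoly d τ a c 0 = a - d := by
    intro c; unfold charPoly; simp; ring
  -- the set of speeds where the characteristic function dips ≤ 0
  set S : Set ℝ := {c | 0 < c ∧ ∃ lam, 0 < lam ∧ charPoly d τ a c lam ≤ 0} with hSdef
  -- 2s gives strict negativity at lam = s
  have hkey : charPoly d τ a (2 * s) s < 0 := by
    unfold charPoly
    have hE : Real.exp (-(s * (2 * s) * τ)) < 1 := by
      rw [Real.exp_lt_one_iff]; nlinarith
    nlinarith
  -- find c₁ ∈ S with c₁ < 2s
  obtain ⟨ε, hε, hball⟩ := Metric.mem_nhds_iff.mp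
    ((isOpen_lt (charPoly_contc d τ a s) continuous_const).mem_nhds hkey)
  set c₁ := 2 * s - min ε (2 * s) / 2 with hc₁def
  have hminpos : 0 < min ε (2 * s) := lt_min hε (by linarith)
  have hc₁pos : 0 < c₁ := by
    have : min ε (2 * s) ≤ 2 * s := min_le_right _ _
    rw [hc₁def]; linarith
  have hc₁lt : c₁ < 2 * s := by rw [hc₁def]; linarith
  have hc₁neg : charPoly d τ a c₁ s < 0 := by
    apply hball
    rw [Metric.mem_ball, Real.dist_eq, hc₁def]
    rw [abs_of_nonpos (by linarith)]
    have : min ε (2 * s) ≤ ε := min_le_left _ _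
    linarith
  have hc₁S : c₁ ∈ S := ⟨hc₁pos, s, hs0, hc₁neg.le⟩
  have hne : S.Nonempty := ⟨c₁, hc₁S⟩
  -- lower bound: every c ∈ S satisfies s / (1 + a * τ) ≤ c
  have hone : (0:ℝ) < 1 + a * τ := by positivity
  have hlow : ∀ c ∈ S, s / (1 + a * τ) ≤ c := by
    rintro c ⟨hc, lam, hlam, hle⟩
    by_contra hcon
    push_neg at hcon
    have hb : c * (1 + a * τ) < s := by
      rw [lt_div_iff₀ hone] at hcon
      linarith
    have hexp : 1 - lam * c * τ ≤ Real.exp (-(lam * c * τ)) := by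
      have := Real.add_one_le_exp (-(lam * c * τ))
      linarith
    have hQ : lam ^ 2 - c * (1 + a * τ) * lam + (a - d) ≤ charPoly d τ a c lam := by
      unfold charPoly
      nlinarith [mul_le_mul_of_nonneg_left hexp ha0.le]
    have hb0 : 0 ≤ c * (1 + a * τ) := by positivity
    nlinarith [sq_nonneg (lam - c * (1 + a * τ) / 2), sq_nonneg (c * (1 + a * τ))]
  have hbdd : BddBelow S := ⟨s / (1 + a * τ), hlow⟩
  set c₀ := sInf S with hc₀def
  have hc₀ge : s / (1 + a * τ) ≤ c₀ := le_csInf hne hlow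
  have hc₀pos : 0 < c₀ := lt_of_lt_of_le (by positivity) hc₀ge
  have hc₀lt : c₀ < 2 * s := lt_of_le_of_lt (csInf_le hbdd hc₁S) hc₁lt
  -- uniform bound on roots for c ≤ c₀ + 1
  set M := c₀ + d + 2 with hMdef
  have hM0 : 0 < M := by rw [hMdef]; linarith
  have hbound : ∀ c lam : ℝ, 0 < c → c ≤ c₀ + 1 → 0 < lam →
      charPoly d τ a c lam ≤ 0 → lam ≤ M := by
    intro c lam hc hcle hlam hle
    by_contra hcon
    push_neg at hcon
    have hE : 0 < a * Real.exp (-(lam * c * τ)) := by positivity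
    have h1 : lam ^ 2 - c * lam - d < 0 := by
      unfold charPoly at hle; linarith
    have h2 : c + 1 ≤ lam := by rw [hMdef] at hcon; linarith
    have h3 : d < lam := by rw [hMdef] at hcon; linarith
    nlinarith
  -- c₀ itself admits lam > 0 with charPoly ≤ 0
  have hc₀S : ∃ lam, 0 < lam ∧ charPoly d τ a c₀ lam ≤ 0 := by
    obtain ⟨lam₀, hlam₀mem, hmin⟩ :=
      isCompact_Icc.exists_isMinOn (Set.nonempty_Icc.mpr hM0.le)
        ((charPoly_cont d τ a c₀).continuousOn (s := Set.Icc 0 M))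
    rw [isMinOn_iff] at hmin
    by_cases hδ : charPoly d τ a c₀ lam₀ ≤ 0
    · refine ⟨lam₀, ?_, hδ⟩
      rcases eq_or_lt_of_le hlam₀mem.1 with h0 | h0
      · exfalso
        rw [← h0] at hδ
        rw [hzero c₀] at hδ
        linarith
      · exact h0
    push_neg at hδ
    exfalso
    set δ := charPoly d τ a c₀ lam₀ with hδdef
    set L := M * (1 + a * τ) + 1 with hLdef
    have hL0 : 0 < L := by positivity
    obtain ⟨η, hη0, hηL, hη1⟩ : ∃ η : ℝ, 0 < η ∧ η * L ≤ δ ∧ η ≤ 1 := by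
      refine ⟨min (δ / L) 1, lt_min (by positivity) one_pos, ?_, min_le_right _ _⟩
      calc min (δ / L) 1 * L ≤ (δ / L) * L :=
            mul_le_mul_of_nonneg_right (min_le_left _ _) hL0.le
        _ = δ := div_mul_cancel₀ δ (ne_of_gt hL0)
    obtain ⟨c, hcS, hclt⟩ := exists_lt_of_csInf_lt hne (by linarith : sInf S < c₀ + η)
    have hc₀le : c₀ ≤ c := csInf_le hbdd hcS
    obtain ⟨hcpos, lam, hlam, hle⟩ := hcS
    have hcle1 : c ≤ c₀ + 1 := by linarith
    have hlamM : lam ≤ M := hbound c lam hcpos hcle1 hlam hle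
    have hlip := charPoly_lip d τ a ha0 hτ.le hc₀pos.le hc₀le hlam.le
    have h1 : charPoly d τ a c₀ lam ≤ (c - c₀) * lam * (1 + a * τ) := by linarith
    have h2 : (c - c₀) * lam * (1 + a * τ) ≤ (c - c₀) * L := by
      have hcc0 : 0 ≤ c - c₀ := by linarith
      have hL1 : lam * (1 + a * τ) ≤ M * (1 + a * τ) :=
        mul_le_mul_of_nonneg_right hlamM hone.le
      have hL2 : lam * (1 + a * τ) ≤ L := by rw [hLdef]; linarith
      calc (c - c₀) * lam * (1 + a * τ) = (c - c₀) * (lam * (1 + a * τ)) := by ring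
        _ ≤ (c - c₀) * L := mul_le_mul_of_nonneg_left hL2 hcc0
    have h3 : (c - c₀) * L < δ := by
      have hmlt : c - c₀ < η := by linarith
      calc (c - c₀) * L < η * L := mul_lt_mul_of_pos_right hmlt hL0
        _ ≤ δ := hηL
    have h4 : δ ≤ charPoly d τ a c₀ lam := hmin lam ⟨hlam.le, hlamM⟩
    linarith
  -- IVT: from charPoly ≤ 0 somewhere positive to an actual root
  have hroot : ∀ c lam : ℝ, 0 < lam → charPoly d τ a c lam ≤ 0 →
      ∃ x, 0 < x ∧ charPoly d τ a c x = 0 := by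
    intro c lam hlam hle
    have hIVT := intermediate_value_Icc' hlam.le
      ((charPoly_cont d τ a c).continuousOn (s := Set.Icc 0 lam))
    have h0mem : (0:ℝ) ∈ Set.Icc (charPoly d τ a c lam) (charPoly d τ a c 0) := by
      rw [hzero c]; exact ⟨hle, by linarith⟩
    obtain ⟨x, hxmem, hxeq⟩ := hIVT h0mem
    refine ⟨x, ?_, hxeq⟩
    rcases eq_or_lt_of_le hxmem.1 with h0 | h0
    · exfalso
      rw [← h0, hzero c] at hxeq
      linarith
    · exact h0
  -- conclusion
  refine ⟨c₀, ⟨hc₀pos, hc₀lt⟩, ?_⟩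
  intro c hc
  constructor
  · rintro ⟨lam, hlam, heq⟩
    exact csInf_le hbdd ⟨hc, lam, hlam, heq.le⟩
  · intro hle
    obtain ⟨lam, hlam, hle0⟩ := hc₀S
    exact hroot c lam hlam
      (le_trans (charPoly_anti d τ a ha0 hτ.le hle hlam.le) hle0)
end

section
/- For every c ∈ (0, c₀(τ)), the equation Δ_c(λ,τ) = 0 has a complex solution λ in the domain Ω := {λ ∈ ℂ : Re λ > 0, 0 < Im λ < π/(cτ)}. -/
/-!
Write `λ = x + i y` and `r = cτ`. For `0 < y < π / r` the imaginary part
`(2x - c) y - a e^{-xr} sin(yr)` of `Δ_c` is strictly increasing in `x`, nonpositive at `x = c/2`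
and nonnegative at `x = (c + ar)/2`, so it vanishes along a continuous curve `x = X(y)`.

Since `c < c₀`, the real function `x ↦ Δ_c(x, τ)` has no zero on `[0, ∞)`, hence is bounded below
by some `m > 0` on `[c/2, (c + ar)/2]`. Along the curve the real part differs from `Δ_c(X(y), τ)`
by at most `y² + a(1 - cos(yr))`, so it is positive for small `y`. Near `y = π/r` we have
`cos(yr) ≤ 0` and `(2X - c) y ≤ a sin(yr) < 2y²`, so the real part
`(X - c/2)² - y² - c²/4 - d + a e^{-Xr} cos(yr)` is negative. The intermediate value theorem on
`(0, π/r)` then gives a common zero of both parts.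
-/

open Set Filter

open Topology

theorem continuousAt_of_strictMono_of_apply_eq_zero {α β : Type*} [LinearOrder α]
    [TopologicalSpace α] [OrderTopology α] [TopologicalSpace β] {f : α → β → ℝ} {g : β → α} {y₀ : β}
    (hf : ∀ x, ContinuousAt (f x) y₀) (hmono : ∀ᶠ y in 𝓝 y₀, StrictMono (f · y))
    (hg : ∀ᶠ y in 𝓝 y₀, f (g y) y = 0) : ContinuousAt g y₀ := by
  have hmono₀ := hmono.self_of_nhds
  have hg₀ := hg.self_of_nhds
  refine tendsto_order.2 ⟨fun b hb => ?_, fun b hb => ?_⟩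
  · have hfb : f b y₀ < 0 := hg₀ ▸ hmono₀ hb
    filter_upwards [(hf b).eventually (gt_mem_nhds hfb), hmono, hg] with y hfy hmono hgy
    exact hmono.lt_iff_lt.1 (hgy ▸ hfy)
  · have hfb : 0 < f b y₀ := hg₀ ▸ hmono₀ hb
    filter_upwards [(hf b).eventually (lt_mem_nhds hfb), hmono, hg] with y hfy hmono hgy
    exact hmono.lt_iff_lt.1 (hgy ▸ hfy)

theorem sin_mul_pos_of_mem_Ioo {r y : ℝ} (hr : 0 < r) (hy : y ∈ Ioo 0 (Real.pi / r)) :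
    0 < Real.sin (y * r) :=
  Real.sin_pos_of_pos_of_lt_pi (mul_pos hy.1 hr) ((lt_div_iff₀ hr).1 hy.2)

-- `Δ_c(z, τ)` with `r = cτ`
open Complex in
noncomputable def delayChar (c d a r : ℝ) (z : ℂ) : ℂ :=
  z ^ 2 - c * z - d + a * exp (-(z * r))

namespace delayChar

open Complex Real

variable {c d a r x y : ℝ}

theorem re_ofReal_add_mul_I (x y : ℝ) :
    (delayChar c d a r (x + y * I)).re =
      x ^ 2 - y ^ 2 - c * x - d + a * Real.exp (-(x * r)) * Real.cos (y * r) := by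
  simp only [delayChar, sq, add_re, sub_re, mul_re, ofReal_re, I_re, mul_zero, ofReal_im, I_im,
    mul_one, sub_self, add_zero, add_im, mul_im, zero_add, zero_mul, sub_zero, exp_re, neg_re,
    neg_im, Real.cos_neg, add_right_inj]
  ring

theorem im_ofReal_add_mul_I (x y : ℝ) :
    (delayChar c d a r (x + y * I)).im =
      (2 * x - c) * y - a * Real.exp (-(x * r)) * Real.sin (y * r) := by
  simp only [delayChar, sq, add_im, sub_im, mul_im, add_re, ofReal_re, mul_re, I_re, mul_zero,
    ofReal_im, I_im, mul_one, sub_self, add_zero, zero_add, zero_mul, sub_zero, exp_im, neg_re,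
    neg_im, Real.sin_neg, mul_neg]
  ring

theorem strictMono_im (ha : 0 ≤ a) (hr : 0 ≤ r) (hy : 0 < y) (hsin : 0 ≤ Real.sin (y * r)) :
    StrictMono fun x : ℝ => (delayChar c d a r (x + y * I)).im := by
  intro x₁ x₂ hx
  have hexp : Real.exp (-(x₂ * r)) ≤ Real.exp (-(x₁ * r)) :=
    Real.exp_le_exp.2 (neg_le_neg (mul_le_mul_of_nonneg_right hx.le hr))
  have := mul_le_mul_of_nonneg_right (mul_le_mul_of_nonneg_left hexp ha) hsin
  simp only [im_ofReal_add_mul_I]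
  nlinarith

theorem exists_im_eq_zero (ha : 0 ≤ a) (hc : 0 ≤ c) (hr : 0 < r) (hy : y ∈ Ioo 0 (π / r)) :
    ∃ x ∈ Icc (c / 2) ((c + a * r) / 2), (delayChar c d a r (x + y * I)).im = 0 := by
  have hsin := sin_mul_pos_of_mem_Ioo hr hy
  have hcont : Continuous fun x : ℝ => (delayChar c d a r (x + y * I)).im := by
    simp only [im_ofReal_add_mul_I]
    fun_prop
  refine intermediate_value_Icc (by nlinarith) hcont.continuousOn ⟨?_, ?_⟩
  · have : 0 ≤ a * Real.exp (-(c / 2 * r)) * Real.sin (y * r) := by positivity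
    simp only [im_ofReal_add_mul_I]
    linarith [show (2 * (c / 2) - c) * y = 0 by ring]
  · have hexp : Real.exp (-((c + a * r) / 2 * r)) ≤ 1 := Real.exp_le_one_iff.2 (by
      have : 0 ≤ (c + a * r) / 2 * r := by positivity
      linarith)
    have := Real.sin_le (mul_pos hy.1 hr).le
    simp only [im_ofReal_add_mul_I]
    nlinarith [mul_le_mul_of_nonneg_right (mul_le_mul_of_nonneg_left hexp ha) hsin.le]

theorem exists_continuousOn_im_eq_zero (ha : 0 ≤ a) (hc : 0 ≤ c) (hr : 0 < r) :
    ∃ X : ℝ → ℝ, ContinuousOn X (Ioo 0 (π / r)) ∧ ∀ y ∈ Ioo 0 (π / r),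
      X y ∈ Icc (c / 2) ((c + a * r) / 2) ∧ (delayChar c d a r (X y + y * I)).im = 0 := by
  choose! X hX using fun y (hy : y ∈ Ioo 0 (π / r)) => exists_im_eq_zero (d := d) ha hc hr hy
  refine ⟨X, fun y hy => ContinuousAt.continuousWithinAt ?_, hX⟩
  refine continuousAt_of_strictMono_of_apply_eq_zero
    (f := fun x y : ℝ => (delayChar c d a r (x + y * I)).im) (fun x => ?_) ?_ ?_
  · simp only [im_ofReal_add_mul_I]
    fun_prop
  · filter_upwards [isOpen_Ioo.mem_nhds hy] with y' hy'
    exact strictMono_im ha hr.le hy'.1 (sin_mul_pos_of_mem_Ioo hr hy').le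
  · filter_upwards [isOpen_Ioo.mem_nhds hy] with y' hy' using (hX y' hy').2

theorem sub_le_re (ha : 0 ≤ a) (hxr : 0 ≤ x * r) (y : ℝ) :
    x ^ 2 - c * x - d + a * Real.exp (-(x * r)) - (y ^ 2 + a * (1 - Real.cos (y * r))) ≤
      (delayChar c d a r (x + y * I)).re := by
  have hexp : Real.exp (-(x * r)) ≤ 1 := Real.exp_le_one_iff.2 (neg_nonpos.2 hxr)
  have hcos : 0 ≤ 1 - Real.cos (y * r) := sub_nonneg.2 (Real.cos_le_one _)
  rw [re_ofReal_add_mul_I]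
  nlinarith [mul_nonneg (mul_nonneg ha hcos) (sub_nonneg.2 hexp)]

theorem re_neg_of_im_eq_zero (hd : 0 ≤ d) (ha : 0 ≤ a) (hx : c / 2 ≤ x) (hxr : 0 ≤ x * r)
    (hy : 0 < y) (hsin : 0 ≤ Real.sin (y * r)) (hcos : Real.cos (y * r) ≤ 0)
    (hsmall : a * Real.sin (y * r) < 2 * y ^ 2) (him : (delayChar c d a r (x + y * I)).im = 0) :
    (delayChar c d a r (x + y * I)).re < 0 := by
  have hexp : Real.exp (-(x * r)) ≤ 1 := Real.exp_le_one_iff.2 (neg_nonpos.2 hxr)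
  rw [im_ofReal_add_mul_I] at him
  have hxy : x - c / 2 < y := by
    nlinarith [mul_le_mul_of_nonneg_right (mul_le_mul_of_nonneg_left hexp ha) hsin]
  rw [re_ofReal_add_mul_I]
  nlinarith [mul_nonpos_of_nonneg_of_nonpos (mul_nonneg ha (Real.exp_pos (-(x * r))).le) hcos,
    mul_self_lt_mul_self (sub_nonneg.2 hx) hxy, sq_nonneg c]

theorem eventually_re_neg (hd : 0 ≤ d) (ha : 0 ≤ a) (hc : 0 ≤ c) (hr : 0 < r) {X : ℝ → ℝ}
    (hX : ∀ y ∈ Ioo 0 (π / r), c / 2 ≤ X y ∧ (delayChar c d a r (X y + y * I)).im = 0) :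
    ∀ᶠ y in 𝓝[<] (π / r), (delayChar c d a r (X y + y * I)).re < 0 := by
  have hπr : 0 < π / r := by positivity
  have hsmall : ∀ᶠ y in 𝓝 (π / r), a * Real.sin (y * r) < 2 * y ^ 2 := by
    have hlim : Tendsto (fun y => a * Real.sin (y * r)) (𝓝 (π / r)) (𝓝 0) := by
      simpa [div_mul_cancel₀ π hr.ne'] using
        ((by fun_prop : Continuous fun y => a * Real.sin (y * r)).tendsto (π / r))
    exact hlim.eventually_lt ((continuous_const.mul (continuous_pow 2)).tendsto _)
      (by positivity : (0 : ℝ) < 2 * (π / r) ^ 2)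
  filter_upwards [Ioo_mem_nhdsLT (div_lt_div_of_pos_right (half_lt_self pi_pos) hr),
    nhdsWithin_le_nhds hsmall] with y hy hsin
  have hy₀ : y ∈ Ioo 0 (π / r) := ⟨(div_pos (half_pos pi_pos) hr).trans hy.1, hy.2⟩
  have hyr : π / 2 ≤ y * r := ((div_lt_iff₀ hr).1 hy.1).le
  refine re_neg_of_im_eq_zero hd ha (hX y hy₀).1 (by nlinarith [(hX y hy₀).1]) hy₀.1
    (sin_mul_pos_of_mem_Ioo hr hy₀).le (Real.cos_nonpos_of_pi_div_two_le_of_le hyr (by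
      linarith [(lt_div_iff₀ hr).1 hy.2, Real.pi_pos])) hsin (hX y hy₀).2

theorem real_pos_of_forall_ne_zero (ha : d < a)
    (hroot : ∀ x > 0, x ^ 2 - c * x - d + a * Real.exp (-(x * r)) ≠ 0) (hx : 0 ≤ x) :
    0 < x ^ 2 - c * x - d + a * Real.exp (-(x * r)) := by
  refine isPreconnected_Ici.lt_of_ne (f := fun x => x ^ 2 - c * x - d + a * Real.exp (-(x * r)))
    (by fun_prop) (fun z hz => ?_) ⟨0, self_mem_Ici, by simpa using ha⟩ hx
  rcases (mem_Ici.1 hz).eq_or_lt with rfl | hz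
  · simpa [neg_add_eq_sub] using (sub_pos.2 ha).ne'
  · exact hroot z hz

theorem eventually_re_pos (ha : 0 ≤ a) (hc : 0 ≤ c) (hr : 0 < r)
    (hP : ∀ x ∈ Icc (c / 2) ((c + a * r) / 2), 0 < x ^ 2 - c * x - d + a * Real.exp (-(x * r)))
    {X : ℝ → ℝ} (hX : ∀ y ∈ Ioo 0 (π / r), X y ∈ Icc (c / 2) ((c + a * r) / 2)) :
    ∀ᶠ y in 𝓝[>] 0, 0 < (delayChar c d a r (X y + y * I)).re := by
  obtain ⟨m, hm, hmP⟩ := isCompact_Icc.exists_forall_le' (by fun_prop) hP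
  have hsmall : ∀ᶠ y in 𝓝 0, y ^ 2 + a * (1 - Real.cos (y * r)) < m := by
    have hlim : Tendsto (fun y => y ^ 2 + a * (1 - Real.cos (y * r))) (𝓝 0) (𝓝 0) := by
      simpa using ((by fun_prop : Continuous fun y => y ^ 2 + a * (1 - Real.cos (y * r))).tendsto 0)
    exact hlim.eventually (gt_mem_nhds hm)
  filter_upwards [Ioo_mem_nhdsGT (by positivity : 0 < π / r), nhdsWithin_le_nhds hsmall]
    with y hy hy_small
  have hXy := hX y hy
  have := sub_le_re (c := c) (d := d) (r := r) (x := X y) ha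
    (mul_nonneg ((div_nonneg hc zero_le_two).trans hXy.1) hr.le) y
  have := hmP _ hXy
  linarith

end delayChar

theorem characteristic_complex_root_general
    (d τ a c₀ : ℝ) (hd : 0 < d) (hτ : 0 < τ) (ha : d < a)
    (hchar : ∀ c : ℝ, 0 < c →
      ((∃ lam : ℝ, 0 < lam ∧
          lam ^ 2 - c * lam - d + a * Real.exp (-(lam * c * τ)) = 0) ↔ c₀ ≤ c))
    (c : ℝ) (hc : c ∈ Set.Ioo 0 c₀) :
    ∃ lam : ℂ, 0 < lam.re ∧ 0 < lam.im ∧ lam.im < Real.pi / (c * τ) ∧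
      lam ^ 2 - (c : ℂ) * lam - (d : ℂ) +
        (a : ℂ) * Complex.exp (-(lam * ((c : ℂ) * (τ : ℂ)))) = 0 := by
  obtain ⟨hc, hcc₀⟩ := hc
  have hr : 0 < c * τ := mul_pos hc hτ
  have ha₀ : 0 < a := hd.trans ha
  have hroot : ∀ x > 0, x ^ 2 - c * x - d + a * Real.exp (-(x * (c * τ))) ≠ 0 :=
    fun x hx h => hcc₀.not_ge ((hchar c hc).1 ⟨x, hx, by rwa [mul_assoc]⟩)
  obtain ⟨X, hXcont, hX⟩ := delayChar.exists_continuousOn_im_eq_zero (d := d) ha₀.le hc.le hr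
  have hπr : 0 < Real.pi / (c * τ) := by positivity
  have hneg := delayChar.eventually_re_neg hd.le ha₀.le hc.le hr fun y hy =>
    ⟨(hX y hy).1.1, (hX y hy).2⟩
  have hpos := delayChar.eventually_re_pos ha₀.le hc.le hr
    (fun x hx => delayChar.real_pos_of_forall_ne_zero ha hroot ((half_pos hc).le.trans hx.1))
    fun y hy => (hX y hy).1
  obtain ⟨y, hy, hre⟩ := isPreconnected_Ioo.intermediate_value₂_eventually₂
    (le_principal_iff.2 (Ioo_mem_nhdsLT hπr)) (le_principal_iff.2 (Ioo_mem_nhdsGT hπr))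
    (by simp only [delayChar.re_ofReal_add_mul_I]; fun_prop) continuousOn_const
    (hneg.mono fun _ h => h.le) (hpos.mono fun _ h => h.le)
  refine ⟨X y + y * Complex.I, ?_, by simpa using hy.1, by simpa using hy.2, ?_⟩
  · simpa using (half_pos hc).trans_le (hX y hy).1.1
  · have hzero : delayChar c d a (c * τ) (X y + y * Complex.I) = 0 := Complex.ext hre (hX y hy).2
    rwa [delayChar, Complex.ofReal_mul] at hzero

/-- Lemma 3.2(ii): for `c ∈ (0, c₀(τ))` the characteristic equation
`Δ_c(λ,τ) = λ² - cλ - d + a e^{-λcτ} = 0` has a complex solution in the domain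
`Ω = {λ : Re λ > 0, 0 < Im λ < π/(cτ)}`. -/
theorem characteristic_complex_root
    (d τ a c₀ : ℝ) (hd : 0 < d) (hτ : 0 < τ) (ha : d < a)
    (hc₀ : c₀ ∈ Set.Ioo 0 (2 * Real.sqrt (a - d)))
    (hchar : ∀ c : ℝ, 0 < c →
      ((∃ lam : ℝ, 0 < lam ∧
          lam ^ 2 - c * lam - d + a * Real.exp (-(lam * c * τ)) = 0) ↔ c₀ ≤ c))
    (c : ℝ) (hc : c ∈ Set.Ioo 0 c₀) :
    ∃ lam : ℂ, 0 < lam.re ∧ 0 < lam.im ∧ lam.im < Real.pi / (c * τ) ∧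
      lam ^ 2 - (c : ℂ) * lam - (d : ℂ) +
        (a : ℂ) * Complex.exp (-(lam * ((c : ℂ) * (τ : ℂ)))) = 0 :=
  characteristic_complex_root_general d τ a c₀ hd hτ ha hchar c hc
end

section
/- For any constants c > 0, τ > 0, d > 0 and a > 0, the equation λ² − c·λ − d + a·e^{−λcτ} = 0 has no complex solution λ with Im λ = π/(cτ). -/
open Set Filter

/-!
On the line `Im λ = π/(cτ)` the delay term `e^{-λcτ}` is the negative real number
`-e^{-cτ Re λ}`, so `λ` would be a root of the real quadratic `z² - cz - D` with
`D = d + a e^{-cτ Re λ} > 0`. Such a quadratic has nonnegative discriminant, hence only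
real roots, contradicting `Im λ ≠ 0`.
-/

theorem Complex.exp_neg_mul_eq_neg_of_im_mul_eq_pi (z : ℂ) (T : ℝ) (h : z.im * T = Real.pi) :
    Complex.exp (-(z * T)) = -(Real.exp (-(z.re * T)) : ℂ) := by
  have hsplit : -(z * T) = ((-(z.re * T) : ℝ) : ℂ) - Real.pi * Complex.I := by
    apply Complex.ext <;> simp [← h]
  rw [hsplit, Complex.exp_sub, Complex.exp_pi_mul_I, Complex.ofReal_exp]
  ring

theorem Complex.im_eq_zero_of_quadratic_eq_zero {z : ℂ} {c D : ℝ}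
    (hdisc : 0 ≤ c ^ 2 + 4 * D) (hz : z ^ 2 - c * z - D = 0) : z.im = 0 := by
  have hre : z.re ^ 2 - z.im ^ 2 - c * z.re - D = 0 := by
    simpa [sq] using congrArg Complex.re hz
  have him : (2 * z.re - c) * z.im = 0 := by
    have := congrArg Complex.im hz
    simp only [sq, Complex.sub_im, Complex.mul_im, Complex.ofReal_re, Complex.ofReal_im,
      Complex.zero_im] at this
    linarith
  by_contra hne
  have hcentre : z.re = c / 2 := by
    linarith [(mul_eq_zero.mp him).resolve_right hne]
  have hpos : 0 < z.im ^ 2 := by positivity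
  rw [hcentre] at hre
  nlinarith

/-- Step 2 in the proof of Lemma 3.2: for any `c, τ, d, a > 0`, the equation
`λ² - cλ - d + a e^{-λcτ} = 0` has no complex solution with `Im λ = π/(cτ)`. -/
theorem no_root_with_critical_imaginary_part
    (c τ d a : ℝ) (hc : 0 < c) (hτ : 0 < τ) (hd : 0 < d) (ha : 0 < a) :
    ∀ lam : ℂ, lam.im = Real.pi / (c * τ) →
      lam ^ 2 - (c : ℂ) * lam - (d : ℂ) +
        (a : ℂ) * Complex.exp (-(lam * ((c : ℂ) * (τ : ℂ)))) ≠ 0 := by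
  intro lam him hroot
  have hcτ : 0 < c * τ := mul_pos hc hτ
  have hexp := Complex.exp_neg_mul_eq_neg_of_im_mul_eq_pi lam (c * τ)
    (by rw [him]; field_simp)
  set E := Real.exp (-(lam.re * (c * τ)))
  have hquad : lam ^ 2 - c * lam - ((d + a * E : ℝ) : ℂ) = 0 := by
    push_cast at hexp ⊢
    rw [hexp] at hroot
    linear_combination hroot
  have hdisc : 0 ≤ c ^ 2 + 4 * (d + a * E) := by positivity
  have hreal := Complex.im_eq_zero_of_quadratic_eq_zero hdisc hquad
  rw [him] at hreal
  exact (div_pos Real.pi_pos hcτ).ne' hreal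
end
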